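/- For the normalized Gaussian G_s(x) = exp(-x²/(2s²)) with s > 0, there exist constants 0 < A ≤ B < ∞ such that for all ξ ∈ ℝ, A ≤ ∑_{k∈ℤ} |Ĝ_s(ξ + 2kπ)|² ≤ B, where Ĝ_s denotes the Fourier transform of G_s. In particular one may take A = e^{-(2πs)²}·c² where Ĝ_s(ξ) = c·e^{-ξ²s²/2}. -/

import Mathlib

/-!
Up to the factor `c² = 2πs²`, the periodization `∑ₖ e^{-(ξ + 2kπ)² s²}` is the even Hurwitz
kernel `∑ₙ e^{-π (n + a)² t}` at `a = ξ / 2π`, `t = 4πs²`, which depends on `a` only modulo `1`.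
For `a ∈ [0, 1)` its `n = 0` term is at least `e^{-πt} = e^{-(2πs)²}`, while the terms with
`n ≥ 0` and with `n < 0` are each dominated by a geometric series of ratio `e^{-πt}`.
-/

open Real HurwitzZeta HurwitzKernelBounds

lemma evenKernel_eq_F_int (a : ℝ) {t : ℝ} (ht : 0 < t) : evenKernel a t = F_int 0 a t := by
  simp [← (hasSum_int_evenKernel a ht).tsum_eq, F_int, f_int]

lemma exp_neg_pi_mul_le_evenKernel (a : UnitAddCircle) {t : ℝ} (ht : 0 < t) :
    exp (-π * t) ≤ evenKernel a t := by
  obtain ⟨b, hb, rfl⟩ := a.eq_coe_Ico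
  have hb2 : b ^ 2 ≤ 1 := pow_le_one₀ hb.1 hb.2.le
  calc exp (-π * t) ≤ exp (-π * (((0 : ℤ) : ℝ) + b) ^ 2 * t) := by
        gcongr
        simpa using mul_le_of_le_one_right pi_pos.le hb2
    _ ≤ evenKernel b t :=
        le_hasSum (hasSum_int_evenKernel b ht) 0 fun _ _ ↦ (exp_pos _).le

lemma evenKernel_le (a : UnitAddCircle) {t : ℝ} (ht : 0 < t) :
    evenKernel a t ≤ 2 / (1 - exp (-π * t)) := by
  obtain ⟨b, hb, rfl⟩ := a.eq_coe_Ico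
  have hq : exp (-π * t) < 1 := exp_lt_one_iff.mpr (by nlinarith [pi_pos])
  have F_nat_le {c : ℝ} (hc : 0 ≤ c) : F_nat 0 c t ≤ 1 / (1 - exp (-π * t)) := by
    refine (le_norm_self _).trans ((F_nat_zero_le hc ht).trans ?_)
    gcongr
    exact exp_le_one_iff.mpr (by rw [neg_mul, neg_mul, neg_nonpos]; positivity)
  rw [evenKernel_eq_F_int b ht, F_int_eq_of_mem_Icc 0 (Set.Ico_subset_Icc_self hb) ht]
  calc F_nat 0 b t + F_nat 0 (1 - b) t ≤ 1 / (1 - exp (-π * t)) + 1 / (1 - exp (-π * t)) :=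
        add_le_add (F_nat_le hb.1) (F_nat_le (sub_nonneg.mpr hb.2.le))
    _ = 2 / (1 - exp (-π * t)) := by ring

lemma hasSum_exp_neg_sq_add_two_pi_int_mul (ξ : ℝ) {s : ℝ} (hs : s ≠ 0) :
    HasSum (fun k : ℤ ↦ exp (-(ξ + 2 * k * π) ^ 2 * s ^ 2))
      (evenKernel (ξ / (2 * π) : ℝ) (4 * π * s ^ 2)) := by
  convert hasSum_int_evenKernel (ξ / (2 * π)) (t := 4 * π * s ^ 2) (by positivity) using 1
  funext k
  congr 1
  field_simp
  ring

lemma sq_abs_mul_exp_half (c u : ℝ) : |c * exp (u / 2)| ^ 2 = c ^ 2 * exp u := by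
  rw [sq_abs, mul_pow, ← exp_nat_mul]
  ring_nf

/-- The Gaussian G_s satisfies the Fourier-domain Riesz bounds: with
Ĝ_s(ξ) = c·e^{-ξ²s²/2}, c = s√(2π), there are constants 0 < A ≤ B < ∞ bounding
∑_{k∈ℤ} |Ĝ_s(ξ + 2kπ)|² for all ξ; one may take A = e^{-(2πs)²}·c². -/
theorem gaussian_riesz_bounds (s : ℝ) (hs : 0 < s) :
    ∃ B : ℝ, Real.exp (-(2 * π * s) ^ 2) * (s * Real.sqrt (2 * π)) ^ 2 ≤ B ∧
      (0 < Real.exp (-(2 * π * s) ^ 2) * (s * Real.sqrt (2 * π)) ^ 2) ∧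
      ∀ ξ : ℝ,
        Real.exp (-(2 * π * s) ^ 2) * (s * Real.sqrt (2 * π)) ^ 2 ≤
            ∑' k : ℤ, |s * Real.sqrt (2 * π) * Real.exp (-(ξ + 2 * k * π) ^ 2 * s ^ 2 / 2)| ^ 2 ∧
          ∑' k : ℤ, |s * Real.sqrt (2 * π) * Real.exp (-(ξ + 2 * k * π) ^ 2 * s ^ 2 / 2)| ^ 2 ≤ B := by
  set c := s * √(2 * π)
  have ht : 0 < 4 * π * s ^ 2 := by positivity
  have hA : exp (-(2 * π * s) ^ 2) = exp (-π * (4 * π * s ^ 2)) := by ring_nf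
  have hsum (ξ : ℝ) : ∑' k : ℤ, |c * exp (-(ξ + 2 * k * π) ^ 2 * s ^ 2 / 2)| ^ 2 =
      evenKernel (ξ / (2 * π) : ℝ) (4 * π * s ^ 2) * c ^ 2 := by
    simp_rw [sq_abs_mul_exp_half, tsum_mul_left,
      (hasSum_exp_neg_sq_add_two_pi_int_mul ξ hs.ne').tsum_eq, mul_comm]
  have bounds (ξ : ℝ) := And.intro
    (mul_le_mul_of_nonneg_right (exp_neg_pi_mul_le_evenKernel (ξ / (2 * π) : ℝ) ht) (sq_nonneg c))
    (mul_le_mul_of_nonneg_right (evenKernel_le (ξ / (2 * π) : ℝ) ht) (sq_nonneg c))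
  refine ⟨2 / (1 - exp (-π * (4 * π * s ^ 2))) * c ^ 2, ?_, by positivity, fun ξ ↦ ?_⟩
  · rw [hA]
    exact (bounds 0).1.trans (bounds 0).2
  · rw [hsum, hA]
    exact bounds ξ
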